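/- arXiv:2408.13053 — 2 statements merged into one kernel-verified Lean document; each statement's English description precedes it below -/
import Mathlib

section
/- Let f : ℝⁿ → ℝ be convex and differentiable at x₀, H positive semidefinite, and suppose x_v satisfies q(x_v; α, x₀) > f(x_v) for some α ∈ [0,1] (overestimation). Then d := (x_v - x₀)ᵀH(x_v - x₀) > 0 and the updated value α* := 2(f(x_v) - f(x₀) - ⟪∇f(x₀), x_v - x₀⟫)/d satisfies 0 ≤ α* < α. -/
/-!
Convexity puts `f` above its tangent plane at `x₀`, so the gap
`f xv - f x₀ - ⟪∇f(x₀), xv - x₀⟫` is nonnegative, and `H ⪰ 0` makes `d ≥ 0`.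
Overestimation says `gap < (α / 2) d`; this rules out `d = 0`, and dividing by `d`
gives `0 ≤ α* < α`.
-/

open Matrix Set

theorem ConvexOn.add_fderiv_sub_le {E : Type*} [NormedAddCommGroup E] [NormedSpace ℝ E]
    {s : Set E} {f : E → ℝ} (hf : ConvexOn ℝ s f) {x y : E} (hx : x ∈ s) (hy : y ∈ s)
    (hfx : DifferentiableAt ℝ f x) :
    f x + fderiv ℝ f x (y - x) ≤ f y := by
  set g : ℝ →ᵃ[ℝ] E := AffineMap.lineMap x y
  have hg0 : g 0 = x := AffineMap.lineMap_apply_zero x y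
  have hg1 : g 1 = y := AffineMap.lineMap_apply_one x y
  have hline : ConvexOn ℝ (g ⁻¹' s) (f ∘ g) := hf.comp_affineMap g
  have hderiv : HasDerivAt (f ∘ g) (fderiv ℝ f x (y - x)) 0 := by
    have hfx' : HasFDerivAt f (fderiv ℝ f x) (g 0) := by
      simpa [hg0] using hfx.hasFDerivAt
    exact hfx'.comp_hasDerivAt 0 AffineMap.hasDerivAt_lineMap
  have hslope := hline.le_slope_of_hasDerivAt (x := 0) (y := 1) (by simpa [hg0] using hx)
    (by simpa [hg1] using hy) one_pos hderiv
  simp only [slope_def_field, Function.comp_apply, hg0, hg1, sub_zero, div_one] at hslope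
  linarith

theorem pos_and_two_mul_div_mem_Ico {gap d α : ℝ} (hgap : 0 ≤ gap) (hd : 0 ≤ d)
    (hover : gap < α / 2 * d) :
    0 < d ∧ 0 ≤ 2 * gap / d ∧ 2 * gap / d < α := by
  have hdpos : 0 < d := by
    refine hd.lt_of_ne fun hd0 => ?_
    rw [← hd0, mul_zero] at hover
    exact hover.not_ge hgap
  refine ⟨hdpos, by positivity, ?_⟩
  rw [div_lt_iff₀ hdpos]
  linarith

theorem stmt7_general (n : ℕ) (f : (Fin n → ℝ) → ℝ) (x₀ xv : Fin n → ℝ)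
    (hconv : ConvexOn ℝ Set.univ f) (hdiff : DifferentiableAt ℝ f x₀)
    (H : Matrix (Fin n) (Fin n) ℝ) (hH : H.PosSemidef)
    (α : ℝ)
    (hover : f x₀ + fderiv ℝ f x₀ (xv - x₀)
      + (α / 2) * ((xv - x₀) ⬝ᵥ H.mulVec (xv - x₀)) > f xv) :
    0 < (xv - x₀) ⬝ᵥ H.mulVec (xv - x₀) ∧
      0 ≤ 2 * (f xv - f x₀ - fderiv ℝ f x₀ (xv - x₀)) / ((xv - x₀) ⬝ᵥ H.mulVec (xv - x₀)) ∧
      2 * (f xv - f x₀ - fderiv ℝ f x₀ (xv - x₀)) / ((xv - x₀) ⬝ᵥ H.mulVec (xv - x₀)) < α := by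
  have hgap := hconv.add_fderiv_sub_le (mem_univ x₀) (mem_univ xv) hdiff
  refine pos_and_two_mul_div_mem_Ico (by linarith) (hH.dotProduct_mulVec_nonneg _) ?_
  linarith

theorem stmt7 (n : ℕ) (f : (Fin n → ℝ) → ℝ) (x₀ xv : Fin n → ℝ)
    (hconv : ConvexOn ℝ Set.univ f) (hdiff : DifferentiableAt ℝ f x₀)
    (H : Matrix (Fin n) (Fin n) ℝ) (hH : H.PosSemidef)
    (α : ℝ) (hα : α ∈ Set.Icc (0 : ℝ) 1)
    (hover : f x₀ + fderiv ℝ f x₀ (xv - x₀)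
      + (α / 2) * ((xv - x₀) ⬝ᵥ H.mulVec (xv - x₀)) > f xv) :
    0 < (xv - x₀) ⬝ᵥ H.mulVec (xv - x₀) ∧
      0 ≤ 2 * (f xv - f x₀ - fderiv ℝ f x₀ (xv - x₀)) / ((xv - x₀) ⬝ᵥ H.mulVec (xv - x₀)) ∧
      2 * (f xv - f x₀ - fderiv ℝ f x₀ (xv - x₀)) / ((xv - x₀) ⬝ᵥ H.mulVec (xv - x₀)) < α :=
  stmt7_general n f x₀ xv hconv hdiff H hH α hover
end

section
/- Let f : ℝⁿ → ℝ be convex and differentiable at w_x with f(w_x) = w_t, and suppose (x_u, t_u) satisfies f(x_u) > t_u and lies on the ray from an interior epigraph point through w (i.e., (x_u,t_u) = w + s·((x_u,t_u) − (x_p,t_p)) for some s > 0 with f(x_p) < t_p and w strictly between them). Then the cut ℓ(x,t) := f(w_x) + ⟪∇f(w_x), x − w_x⟫ − t is strictly positive at (x_u, t_u): ℓ(x_u, t_u) > 0. -/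
open Set

/-
The cut `ℓ(x, t) = f w + f'(x - w) - t` is affine and vanishes at the boundary point `(w, f w)`.
At the interior point `(p, t_p)` it is negative, because the tangent plane of a convex function
lies below its graph. Since `w` is the convex combination `l u + (1 - l) p` with `0 < l < 1`,
`l ℓ(u) + (1 - l) ℓ(p) = ℓ(w) = 0`, which forces `ℓ(u) > 0`.
-/

theorem ConvexOn.add_apply_sub_le_of_hasFDerivAt {E : Type*} [NormedAddCommGroup E]
    [NormedSpace ℝ E] {s : Set E} {f : E → ℝ} {f' : E →L[ℝ] ℝ} {x y : E}
    (hf : ConvexOn ℝ s f) (hx : x ∈ s) (hy : y ∈ s) (hfx : HasFDerivAt f f' x) :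
    f x + f' (y - x) ≤ f y := by
  set g : ℝ →ᵃ[ℝ] E := AffineMap.lineMap x y
  have hg : ConvexOn ℝ (g ⁻¹' s) (f ∘ g) := hf.comp_affineMap g
  have hderiv : HasDerivAt (f ∘ g) (f' (y - x)) 0 := by
    have hfg : HasFDerivAt f f' (g 0) := by simpa [g] using hfx
    exact hfg.comp_hasDerivAt 0 AffineMap.hasDerivAt_lineMap
  have hslope := hg.le_slope_of_hasDerivAt (by simpa [g] using hx) (by simpa [g] using hy)
    one_pos hderiv
  simp only [slope_def_field, Function.comp_apply, g, AffineMap.lineMap_apply_zero,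
    AffineMap.lineMap_apply_one, sub_zero, div_one] at hslope
  linarith

theorem stmt11_general (n : ℕ) (f : (Fin n → ℝ) → ℝ) (hconv : ConvexOn ℝ Set.univ f)
    (wx xu xp : Fin n → ℝ) (wt tu tp : ℝ)
    (hdiff : DifferentiableAt ℝ f wx) (hw : f wx = wt)
    (hp : f xp < tp)
    (l : ℝ) (hl : l ∈ Set.Ioo (0 : ℝ) 1)
    (hwx : wx = l • xu + (1 - l) • xp) (hwt : wt = l * tu + (1 - l) * tp) :
    f wx + fderiv ℝ f wx (xu - wx) - tu > 0 := by
  obtain ⟨hl0, hl1⟩ := hl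
  set D := fderiv ℝ f wx
  have hinterior : f wx + D (xp - wx) - tp < 0 := by
    have := hconv.add_apply_sub_le_of_hasFDerivAt (mem_univ wx) (mem_univ xp)
      hdiff.hasFDerivAt
    linarith
  have hcomb : l * D (xu - wx) + (1 - l) * D (xp - wx) = 0 := by
    have : l • (xu - wx) + (1 - l) • (xp - wx) = 0 := by rw [hwx]; module
    simpa only [map_add, map_smul, smul_eq_mul, map_zero] using congrArg D this
  have hcut : l * (f wx + D (xu - wx) - tu) = (1 - l) * -(f wx + D (xp - wx) - tp) := by
    linear_combination hcomb + hw + hwt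
  have hpos : 0 < l * (f wx + D (xu - wx) - tu) := by
    rw [hcut]
    exact mul_pos (sub_pos.2 hl1) (neg_pos.2 hinterior)
  exact pos_of_mul_pos_right hpos hl0.le

theorem stmt11 (n : ℕ) (f : (Fin n → ℝ) → ℝ) (hconv : ConvexOn ℝ Set.univ f)
    (wx xu xp : Fin n → ℝ) (wt tu tp : ℝ)
    (hdiff : DifferentiableAt ℝ f wx) (hw : f wx = wt)
    (hp : f xp < tp) (hu : f xu > tu)
    (l : ℝ) (hl : l ∈ Set.Ioo (0 : ℝ) 1)
    (hwx : wx = l • xu + (1 - l) • xp) (hwt : wt = l * tu + (1 - l) * tp) :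
    f wx + fderiv ℝ f wx (xu - wx) - tu > 0 :=
  stmt11_general n f hconv wx xu xp wt tu tp hdiff hw hp l hl hwx hwt
end
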